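/- arXiv:2307.06851 — 9 statements merged into one kernel-verified Lean document; each statement's English description precedes it below -/
import Mathlib

section
/- In a gs-monoidal category, if f : A → X is a normalized morphism (i.e. f∘dom(f) = f), then its domain dom(f) : A → A is a functional morphism, i.e. Δ_A∘dom(f) = (dom(f)⊗dom(f))∘Δ_A. -/
open CategoryTheory MonoidalCategory

universe w v u v' u'

/-- A gs-monoidal category: a symmetric monoidal category in which every object carries a
commutative comonoid structure (copy and discard), compatible with tensor products. -/
class GSCat (C : Type u) [Category.{v} C] [MonoidalCategory C] [SymmetricCategory C] where
  copy : ∀ A : C, A ⟶ A ⊗ A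
  discard : ∀ A : C, A ⟶ 𝟙_ C
  copy_assoc : ∀ A : C, copy A ≫ (copy A ▷ A) ≫ (α_ A A A).hom = copy A ≫ (A ◁ copy A)
  copy_comm : ∀ A : C, copy A ≫ (β_ A A).hom = copy A
  copy_counit_left : ∀ A : C, copy A ≫ (discard A ▷ A) ≫ (λ_ A).hom = 𝟙 A
  copy_counit_right : ∀ A : C, copy A ≫ (A ◁ discard A) ≫ (ρ_ A).hom = 𝟙 A
  copy_tensor : ∀ A X : C, copy (A ⊗ X) = (copy A ⊗ₘ copy X) ≫ tensorμ A A X X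
  discard_tensor : ∀ A X : C, discard (A ⊗ X) = (discard A ⊗ₘ discard X) ≫ (λ_ (𝟙_ C)).hom
  discard_unit : discard (𝟙_ C) = 𝟙 (𝟙_ C)

variable {C : Type u} [Category.{v} C] [MonoidalCategory C] [SymmetricCategory C] [GSCat C]

/-- The domain `dom(f) = ρ_A ∘ (id_A ⊗ (ε_X ∘ f)) ∘ Δ_A` of a morphism `f : A ⟶ X`. -/
def gsDom {A X : C} (f : A ⟶ X) : A ⟶ A :=
  GSCat.copy A ≫ (A ◁ (f ≫ GSCat.discard X)) ≫ (ρ_ A).hom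

/-- A morphism is normalized if `f ∘ dom(f) = f`. -/
def GsNormalized {A X : C} (f : A ⟶ X) : Prop := gsDom f ≫ f = f

/-- A morphism is functional if `Δ_X ∘ f = (f ⊗ f) ∘ Δ_A`. -/
def GsFunctional {A X : C} (f : A ⟶ X) : Prop :=
  f ≫ GSCat.copy X = GSCat.copy A ≫ (f ⊗ₘ f)

/-- A morphism is total if `ε_X ∘ f = ε_A`. -/
def GsTotal {A X : C} (f : A ⟶ X) : Prop := f ≫ GSCat.discard X = GSCat.discard A

/-- `f ⊒ g` : `f` agrees with `g` on the domain of `g`, i.e. `f ∘ dom(g) = g`. -/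
def GsRestrict {A X : C} (f g : A ⟶ X) : Prop := gsDom g ≫ f = g

/-- A gs-monoidal category is normalized if all of its morphisms are normalized. -/
class GsNormalizedCat (C : Type u) [Category.{v} C] [MonoidalCategory C]
    [SymmetricCategory C] [GSCat C] : Prop where
  norm : ∀ {A X : C} (f : A ⟶ X), GsNormalized f

/-! `dom f` copies its input and tests the second copy with `f ≫ ε`. Coassociativity and
cocommutativity let it slide past a further copy on either leg, so
`Δ ∘ dom f = (dom f ⊗ id) ∘ Δ = (id ⊗ dom f) ∘ Δ`, whence `(dom f ⊗ dom f) ∘ Δ = Δ ∘ dom f ∘ dom f`.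
Normalization makes `dom f` idempotent: `dom f ∘ dom f = dom (f ∘ dom f) = dom f`. -/

section

variable {A X Y : C}

lemma copy_comp_whiskerLeft_gsDom (f : A ⟶ X) :
    GSCat.copy A ≫ (A ◁ gsDom f) = gsDom f ≫ GSCat.copy A := by
  set g : A ⟶ 𝟙_ C := f ≫ GSCat.discard X
  have lhs : GSCat.copy A ≫ (A ◁ gsDom f)
      = GSCat.copy A ≫ (GSCat.copy A ▷ A) ≫ ((A ⊗ A) ◁ g) ≫ (ρ_ (A ⊗ A)).hom := by
    rw [gsDom, MonoidalCategory.whiskerLeft_comp, MonoidalCategory.whiskerLeft_comp]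
    slice_lhs 1 2 => rw [← GSCat.copy_assoc]
    simp only [Category.assoc]
    rw [← associator_naturality_right_assoc, whiskerLeft_rightUnitor, Iso.hom_inv_id_assoc]
  have rhs : gsDom f ≫ GSCat.copy A
      = GSCat.copy A ≫ (GSCat.copy A ▷ A) ≫ ((A ⊗ A) ◁ g) ≫ (ρ_ (A ⊗ A)).hom := by
    rw [gsDom]
    simp only [Category.assoc]
    rw [← rightUnitor_naturality, ← whisker_exchange_assoc]
  rw [lhs, rhs]

lemma copy_comp_whiskerRight_gsDom (f : A ⟶ X) :
    GSCat.copy A ≫ (gsDom f ▷ A) = gsDom f ≫ GSCat.copy A := by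
  conv_lhs => rw [← GSCat.copy_comm A]
  rw [Category.assoc, ← BraidedCategory.braiding_naturality_right,
    ← Category.assoc, copy_comp_whiskerLeft_gsDom, Category.assoc, GSCat.copy_comm]

lemma gsDom_comp_gsDom (f : A ⟶ X) (g : A ⟶ Y) :
    gsDom g ≫ gsDom f = gsDom (gsDom g ≫ f) := by
  calc gsDom g ≫ gsDom f
      = (gsDom g ≫ GSCat.copy A) ≫ (A ◁ (f ≫ GSCat.discard X)) ≫ (ρ_ A).hom := by
        simp only [gsDom, Category.assoc]
    _ = gsDom (gsDom g ≫ f) := by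
        rw [← copy_comp_whiskerLeft_gsDom, Category.assoc,
          ← MonoidalCategory.whiskerLeft_comp_assoc]
        simp only [gsDom, Category.assoc]

lemma GsNormalized.gsDom_comp_gsDom_self {f : A ⟶ X} (hf : GsNormalized f) :
    gsDom f ≫ gsDom f = gsDom f := by
  rw [gsDom_comp_gsDom, hf]

end

/-- In a gs-monoidal category, the domain of a normalized morphism is
functional. -/
theorem domain_of_normalized_is_functional {A X : C} (f : A ⟶ X)
    (hf : GsNormalized f) : GsFunctional (gsDom f) := by
  calc gsDom f ≫ GSCat.copy A
      = gsDom f ≫ gsDom f ≫ GSCat.copy A := by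
        rw [← Category.assoc, hf.gsDom_comp_gsDom_self]
    _ = GSCat.copy A ≫ (gsDom f ▷ A) ≫ (A ◁ gsDom f) := by
        rw [← copy_comp_whiskerLeft_gsDom, ← Category.assoc, ← copy_comp_whiskerRight_gsDom,
          Category.assoc]
    _ = GSCat.copy A ≫ (gsDom f ⊗ₘ gsDom f) := by rw [MonoidalCategory.tensorHom_def]
end

section
/- Let (C,T,C₀,⪰) be a target–context category. Then for every scalar w : I → I and every f : A → T⊗C₀, one has f ⪰ λ_{T⊗C₀}∘(w⊗f)∘λ_A^{-1}, where λ denotes the left unitor; that is, the morphism obtained by tensoring f with the scalar w lies below f in the ambient relation. (In fact f ⊒ λ_{T⊗C₀}∘(w⊗f)∘λ_A^{-1} holds.) -/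
open CategoryTheory MonoidalCategory

universe w v u v' u'

variable {C : Type u} [Category.{v} C] [MonoidalCategory C] [SymmetricCategory C] [GSCat C]

/-- A target--context category: a (normalized) gs-monoidal category with distinguished
objects `T` (targets) and `C0` (contexts) together with an ambient preorder on each
hom-set into `T ⊗ C0`, containing the restriction order and preserved by precomposition. -/
structure TCC (C : Type u) [Category.{v} C] [MonoidalCategory C] [SymmetricCategory C]
    [GSCat C] (T C0 : C) where
  amb : ∀ {A : C}, (A ⟶ T ⊗ C0) → (A ⟶ T ⊗ C0) → Prop
  amb_refl : ∀ {A : C} (f : A ⟶ T ⊗ C0), amb f f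
  amb_trans : ∀ {A : C} {f g h : A ⟶ T ⊗ C0}, amb f g → amb g h → amb f h
  amb_of_restrict : ∀ {A : C} {f g : A ⟶ T ⊗ C0}, GsRestrict f g → amb f g
  amb_precomp : ∀ {A Z : C} {f g : A ⟶ T ⊗ C0} (h : Z ⟶ A), amb f g → amb (h ≫ f) (h ≫ g)

/-! Tensoring with a scalar `w` is precomposition with the scalar action `w • -`, which is natural.
Since `ε ∘ (w • f) = w ∘ ε ∘ f`, the domain of `w • f` is `w • dom f`; normalization of `f` then
gives `f ∘ dom (w • f) = w • (f ∘ dom f) = w • f`. -/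

section LeftScalar

variable {D : Type u'} [Category.{v'} D] [MonoidalCategory D]

def leftScalar (w : 𝟙_ D ⟶ 𝟙_ D) (A : D) : A ⟶ A :=
  (λ_ A).inv ≫ (w ▷ A) ≫ (λ_ A).hom

lemma leftScalar_naturality (w : 𝟙_ D ⟶ 𝟙_ D) {A X : D} (f : A ⟶ X) :
    leftScalar w A ≫ f = f ≫ leftScalar w X := by
  simp only [leftScalar, Category.assoc]
  rw [← leftUnitor_naturality, ← whisker_exchange_assoc, leftUnitor_inv_naturality_assoc]

lemma leftScalar_unit (w : 𝟙_ D ⟶ 𝟙_ D) : leftScalar w (𝟙_ D) = w := by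
  rw [leftScalar, unitors_equal, unitors_inv_equal, rightUnitor_naturality, Iso.inv_hom_id_assoc]

lemma leftScalar_comp (w : 𝟙_ D ⟶ 𝟙_ D) {A X : D} (f : A ⟶ X) :
    leftScalar w A ≫ f = (λ_ A).inv ≫ (w ⊗ₘ f) ≫ (λ_ X).hom := by
  simp only [MonoidalCategory.tensorHom_def, leftScalar, Category.assoc, leftUnitor_naturality]

lemma whiskerLeft_comp_rightUnitor_hom [BraidedCategory D] (w : 𝟙_ D ⟶ 𝟙_ D) (A : D) :
    (A ◁ w) ≫ (ρ_ A).hom = (ρ_ A).hom ≫ leftScalar w A := by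
  rw [← braiding_leftUnitor, BraidedCategory.braiding_naturality_right_assoc]
  simp [leftScalar]

end LeftScalar

lemma gsDom_leftScalar_comp (w : 𝟙_ C ⟶ 𝟙_ C) {A X : C} (f : A ⟶ X) :
    gsDom (leftScalar w A ≫ f) = gsDom f ≫ leftScalar w A := by
  have discard_comp : (leftScalar w A ≫ f) ≫ GSCat.discard X = (f ≫ GSCat.discard X) ≫ w := by
    rw [Category.assoc, leftScalar_naturality, leftScalar_unit]
  simp only [gsDom, discard_comp, whiskerLeft_comp, Category.assoc,
    whiskerLeft_comp_rightUnitor_hom]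

lemma GsNormalized.restrict_leftScalar_comp {A X : C} {f : A ⟶ X} (hf : GsNormalized f)
    (w : 𝟙_ C ⟶ 𝟙_ C) : GsRestrict f (leftScalar w A ≫ f) := by
  rw [GsRestrict, gsDom_leftScalar_comp, Category.assoc, leftScalar_naturality,
    ← Category.assoc, hf]

/-- In a target--context category, tensoring `f : A ⟶ T ⊗ C0` with any scalar
`w : I ⟶ I` yields a morphism lying below `f` both in the restriction order `⊒` and hence in
the ambient relation `⪰`. -/
theorem scalar_tensor_below [GsNormalizedCat C] {T C0 : C} (𝒯 : TCC C T C0)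
    {A : C} (w : 𝟙_ C ⟶ 𝟙_ C) (f : A ⟶ T ⊗ C0) :
    GsRestrict f ((λ_ A).inv ≫ (w ⊗ₘ f) ≫ (λ_ (T ⊗ C0)).hom) ∧
    𝒯.amb f ((λ_ A).inv ≫ (w ⊗ₘ f) ≫ (λ_ (T ⊗ C0)).hom) := by
  have restrict := (GsNormalizedCat.norm f).restrict_leftScalar_comp w
  rw [leftScalar_comp] at restrict
  exact ⟨restrict, 𝒯.amb_of_restrict restrict⟩
end

section
/- Let F : C → D be a lax gs-monoidal functor between gs-monoidal categories. Then for every morphism g : A → X in C, F(dom(g)) = dom(F(g)) as morphisms F(A) → F(A), where dom denotes the domain construction in C and D respectively. -/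
open CategoryTheory MonoidalCategory

universe w v u v' u'

variable {C : Type u} [Category.{v} C] [MonoidalCategory C] [SymmetricCategory C] [GSCat C]

/-- A lax gs-monoidal functor between gs-monoidal categories: a lax symmetric monoidal
functor whose structure morphisms are compatible with copy and discard. -/
structure LaxGSFun (C : Type u) (D : Type u') [Category.{v} C] [MonoidalCategory C]
    [SymmetricCategory C] [GSCat C] [Category.{v'} D] [MonoidalCategory D]
    [SymmetricCategory D] [GSCat D] where
  F : C ⥤ D
  ε : 𝟙_ D ⟶ F.obj (𝟙_ C)
  μ : ∀ A B : C, F.obj A ⊗ F.obj B ⟶ F.obj (A ⊗ B)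
  μ_natural : ∀ {A A' B B' : C} (f : A ⟶ A') (g : B ⟶ B'),
    (F.map f ⊗ₘ F.map g) ≫ μ A' B' = μ A B ≫ F.map (f ⊗ₘ g)
  assoc : ∀ A B X : C,
    (μ A B ▷ F.obj X) ≫ μ (A ⊗ B) X ≫ F.map (α_ A B X).hom =
      (α_ (F.obj A) (F.obj B) (F.obj X)).hom ≫ (F.obj A ◁ μ B X) ≫ μ A (B ⊗ X)
  left_unit : ∀ A : C,
    (ε ▷ F.obj A) ≫ μ (𝟙_ C) A ≫ F.map (λ_ A).hom = (λ_ (F.obj A)).hom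
  right_unit : ∀ A : C,
    (F.obj A ◁ ε) ≫ μ A (𝟙_ C) ≫ F.map (ρ_ A).hom = (ρ_ (F.obj A)).hom
  braided : ∀ A B : C,
    μ A B ≫ F.map (β_ A B).hom = (β_ (F.obj A) (F.obj B)).hom ≫ μ B A
  gs_copy : ∀ A : C, GSCat.copy (F.obj A) ≫ μ A A = F.map (GSCat.copy A)
  gs_discard : ∀ A : C, GSCat.discard (F.obj A) ≫ ε = F.map (GSCat.discard A)

/-! Since `F(Δ_A) = Δ_{FA} ≫ μ` and `F(ε_X ∘ g) = (ε_{FX} ∘ F g) ≫ ψ₀`, the image of `dom g` becomes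
`Δ ≫ (FA ◁ (ε ∘ F g)) ≫ (FA ◁ ψ₀) ≫ μ ≫ F(ρ)` by naturality of `μ`, and the right unit
coherence collapses the tail `(FA ◁ ψ₀) ≫ μ ≫ F(ρ)` to `ρ`. -/

namespace LaxGSFun

variable {D : Type u'} [Category.{v'} D] [MonoidalCategory D] [SymmetricCategory D] [GSCat D]
  (Φ : LaxGSFun C D)

theorem μ_map_whiskerLeft {A B B' : C} (f : B ⟶ B') :
    Φ.μ A B ≫ Φ.F.map (A ◁ f) = (Φ.F.obj A ◁ Φ.F.map f) ≫ Φ.μ A B' := by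
  simpa [id_tensorHom] using (Φ.μ_natural (𝟙 A) f).symm

theorem map_comp_discard {A X : C} (g : A ⟶ X) :
    Φ.F.map (g ≫ GSCat.discard X) = (Φ.F.map g ≫ GSCat.discard (Φ.F.obj X)) ≫ Φ.ε := by
  rw [Functor.map_comp, ← Φ.gs_discard, Category.assoc]

theorem μ_map_whiskerLeft_rightUnitor {A B : C} (f : B ⟶ 𝟙_ C) (k : Φ.F.obj B ⟶ 𝟙_ D)
    (hk : Φ.F.map f = k ≫ Φ.ε) :
    Φ.μ A B ≫ Φ.F.map (A ◁ f) ≫ Φ.F.map (ρ_ A).hom = (Φ.F.obj A ◁ k) ≫ (ρ_ (Φ.F.obj A)).hom := by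
  rw [← Category.assoc, μ_map_whiskerLeft, hk, whiskerLeft_comp, Category.assoc, Category.assoc,
    Φ.right_unit]

end LaxGSFun

/-- A lax gs-monoidal functor preserves domains: `F(dom g) = dom (F g)`. -/
theorem laxGS_functor_preserves_domain {D : Type u'} [Category.{v'} D] [MonoidalCategory D]
    [SymmetricCategory D] [GSCat D] (Φ : LaxGSFun C D) {A X : C} (g : A ⟶ X) :
    Φ.F.map (gsDom g) = gsDom (Φ.F.map g) := by
  rw [gsDom, gsDom, Functor.map_comp, Functor.map_comp, ← Φ.gs_copy, Category.assoc,
    Φ.μ_map_whiskerLeft_rightUnitor _ _ (Φ.map_comp_discard g)]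
end

section
/- Let (Beh, B̂, êval, ⪰_B) be a behavior structure on a normalized gs-monoidal category C with distinguished objects T and C₀, and let ⪰ be the induced ambient imitation relation. Then for all f,g : A → T⊗C₀, f ⊒ g implies f ⪰ g (morphisms behaviorally imitate restrictions to their domain). -/
open CategoryTheory MonoidalCategory

universe w v u v' u'

variable {C : Type u} [Category.{v} C] [MonoidalCategory C] [SymmetricCategory C] [GSCat C]

/-- Composition of set-valued relations (first `f`, then `g`). -/
def RComp {α β γ : Type*} (f : α → Set β) (g : β → Set γ) : α → Set γ :=
  fun a => {c | ∃ b ∈ f a, c ∈ g b}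

/-- Existence of an enhancement map `U → V` with respect to `pre`
(read `pre x y` as "`x ⪰ y`"): a map sending each `u ∈ U` to an element of `V` above it. -/
def IsEnh {X : Type w} (pre : X → X → Prop) (U V : Set X) : Prop :=
  ∃ e : U → V, ∀ u : U, pre (e u : X) (u : X)

/-- Existence of a degradation map `V → U`: a map sending each `v ∈ V` to an element of `U`
below it. -/
def IsDeg {X : Type w} (pre : X → X → Prop) (U V : Set X) : Prop :=
  ∃ d : V → U, ∀ v : V, pre (v : X) (d v : X)

/-- The imitation relation: `ν` imitates `μ` iff for every `a` in the domain of `μ` there are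
an enhancement map `μ a → ν a` and a degradation map `ν a → μ a`. -/
def Imitates {α : Type*} {X : Type w} (pre : X → X → Prop) (ν μ : α → Set X) : Prop :=
  ∀ a : α, (μ a).Nonempty → IsEnh pre (μ a) (ν a) ∧ IsDeg pre (μ a) (ν a)

/-- A behavior structure on a gs-monoidal category with distinguished objects `T`, `C0`:
a lax gs-monoidal functor `Beh` into the category `Rel` of sets and relations (encoded
concretely: `obj` on objects, set-valued `map` on morphisms, lax structure maps `unitSet`
(the relation `ψ₀`) and `mul` (the relations `ψ_{A,X}`) with the lax symmetric monoidal
coherences and compatibility with copy/discard), a set `Bhat` of behaviors, an evaluation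
function `evalHat : Beh(T ⊗ C0) → Bhat` and a preorder `brel` on `Bhat`. -/
structure BehStr (C : Type u) [Category.{v} C] [MonoidalCategory C] [SymmetricCategory C]
    [GSCat C] (T C0 : C) (Bhat : Type w) where
  obj : C → Type w
  map : ∀ {A X : C}, (A ⟶ X) → obj A → Set (obj X)
  map_id : ∀ {A : C} (a : obj A), map (𝟙 A) a = {a}
  map_comp : ∀ {A X Y : C} (f : A ⟶ X) (g : X ⟶ Y) (a : obj A),
    map (f ≫ g) a = {y | ∃ x ∈ map f a, y ∈ map g x}
  unitSet : Set (obj (𝟙_ C))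
  mul : ∀ A X : C, obj A → obj X → Set (obj (A ⊗ X))
  mul_natural : ∀ {A A' X X' : C} (f : A ⟶ A') (g : X ⟶ X')
      (a : obj A) (x : obj X) (y : obj (A' ⊗ X')),
    (∃ a' ∈ map f a, ∃ x' ∈ map g x, y ∈ mul A' X' a' x') ↔
      ∃ z ∈ mul A X a x, y ∈ map (f ⊗ₘ g) z
  mul_assoc : ∀ {A X Y : C} (a : obj A) (x : obj X) (y : obj Y) (u : obj (A ⊗ (X ⊗ Y))),
    (∃ z ∈ mul A X a x, ∃ v ∈ mul (A ⊗ X) Y z y, u ∈ map (α_ A X Y).hom v) ↔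
      ∃ t ∈ mul X Y x y, u ∈ mul A (X ⊗ Y) a t
  mul_left_unit : ∀ {A : C} (a b : obj A),
    (∃ i ∈ unitSet, ∃ z ∈ mul (𝟙_ C) A i a, b ∈ map (λ_ A).hom z) ↔ b = a
  mul_right_unit : ∀ {A : C} (a b : obj A),
    (∃ i ∈ unitSet, ∃ z ∈ mul A (𝟙_ C) a i, b ∈ map (ρ_ A).hom z) ↔ b = a
  mul_braiding : ∀ {A X : C} (a : obj A) (x : obj X) (u : obj (X ⊗ A)),
    (∃ z ∈ mul A X a x, u ∈ map (β_ A X).hom z) ↔ u ∈ mul X A x a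
  map_copy : ∀ {A : C} (a : obj A), map (GSCat.copy A) a = mul A A a a
  map_discard : ∀ {A : C} (a : obj A), map (GSCat.discard A) a = unitSet
  evalHat : obj (T ⊗ C0) → Bhat
  brel : Bhat → Bhat → Prop
  brel_refl : ∀ b : Bhat, brel b b
  brel_trans : ∀ {b₁ b₂ b₃ : Bhat}, brel b₁ b₂ → brel b₂ b₃ → brel b₁ b₃

/-- The ambient imitation relation induced by a behavior structure:
`f ⪰ g` iff `êval ∘ Beh(f)` imitates `êval ∘ Beh(g)`. -/
def BehStr.aim {T C0 : C} {Bhat : Type w} (β : BehStr C T C0 Bhat) {A : C}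
    (f g : A ⟶ T ⊗ C0) : Prop :=
  Imitates β.brel (fun a => β.evalHat '' β.map f a) (fun a => β.evalHat '' β.map g a)

/-!
Laxness of `Beh` with respect to copy, discard and the right unitor makes `Beh(dom g)` the
partial identity on the points where `Beh g` is defined. Hence `Beh g = Beh f ∘ Beh(dom g)`
agrees with `Beh f` wherever `Beh g` is nonempty, and equal behavior sets imitate each other
by reflexivity of `⪰_B`.
-/

theorem imitates_of_eq_of_nonempty {α : Type*} {X : Type w} {pre : X → X → Prop}
    (hrefl : ∀ x, pre x x) {ν μ : α → Set X} (h : ∀ a, (μ a).Nonempty → ν a = μ a) :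
    Imitates pre ν μ := by
  intro a ha
  rw [h a ha]
  exact ⟨⟨id, fun u => hrefl u⟩, ⟨id, fun v => hrefl v⟩⟩

namespace BehStr

variable {T C0 : C} {Bhat : Type w} (β : BehStr C T C0 Bhat)

theorem mem_map_copy_whiskerLeft {A Y : C} (k : A ⟶ Y) (a : β.obj A) (u : β.obj (A ⊗ Y)) :
    u ∈ β.map (GSCat.copy A ≫ A ◁ k) a ↔ ∃ y ∈ β.map k a, u ∈ β.mul A Y a y := by
  have hnat := β.mul_natural (𝟙 A) k a a u
  simp only [β.map_id, Set.mem_singleton_iff, exists_eq_left, id_tensorHom] at hnat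
  rw [hnat, β.map_comp, β.map_copy]
  rfl

theorem mem_map_comp_discard {A X : C} (g : A ⟶ X) (a : β.obj A) (i : β.obj (𝟙_ C)) :
    i ∈ β.map (g ≫ GSCat.discard X) a ↔ (β.map g a).Nonempty ∧ i ∈ β.unitSet := by
  simp only [β.map_comp, β.map_discard, Set.mem_ofPred_eq]
  exact ⟨fun ⟨x, hx, hi⟩ => ⟨⟨x, hx⟩, hi⟩, fun ⟨⟨x, hx⟩, hi⟩ => ⟨x, hx, hi⟩⟩

theorem mem_map_gsDom {A X : C} (g : A ⟶ X) (a b : β.obj A) :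
    b ∈ β.map (gsDom g) a ↔ (β.map g a).Nonempty ∧ b = a := by
  rw [gsDom, ← Category.assoc, β.map_comp, ← β.mul_right_unit a b]
  simp only [Set.mem_ofPred_eq, mem_map_copy_whiskerLeft, mem_map_comp_discard]
  constructor
  · rintro ⟨u, ⟨i, ⟨hg, hi⟩, hu⟩, hb⟩
    exact ⟨hg, i, hi, u, hu, hb⟩
  · rintro ⟨hg, i, hi, u, hu, hb⟩
    exact ⟨u, ⟨i, ⟨hg, hi⟩, hu⟩, hb⟩

theorem map_eq_of_restrict {A X : C} {f g : A ⟶ X} (h : GsRestrict f g) {a : β.obj A}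
    (hg : (β.map g a).Nonempty) : β.map f a = β.map g a := by
  ext y
  rw [← h, β.map_comp]
  simp [mem_map_gsDom, hg]

end BehStr

theorem beh_restriction_general {T C0 : C} {Bhat : Type w}
    (β : BehStr C T C0 Bhat) {A : C} (f g : A ⟶ T ⊗ C0)
    (h : GsRestrict f g) : β.aim f g :=
  imitates_of_eq_of_nonempty β.brel_refl fun _ hg => by
    rw [β.map_eq_of_restrict h hg.of_image]

/-- For a behavior structure on a normalized gs-monoidal category, morphisms
behaviorally imitate restrictions to their domain: `f ⊒ g` implies `f ⪰ g` for the induced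
ambient imitation relation. -/
theorem beh_restriction [GsNormalizedCat C] {T C0 : C} {Bhat : Type w}
    (β : BehStr C T C0 Bhat) {A : C} (f g : A ⟶ T ⊗ C0)
    (h : GsRestrict f g) : β.aim f g :=
  beh_restriction_general β f g h
end

section
/- In any target–context category (C,T,C₀,⪰), the lax context-reduction relation ⪰^cr is a preorder (reflexive and transitive) on every hom-set C(A,T). -/
open CategoryTheory MonoidalCategory

universe w v u v' u'

variable {C : Type u} [Category.{v} C] [MonoidalCategory C] [SymmetricCategory C] [GSCat C]

/-- `f` lax context-reduces to `g` : there is `f_C : A ⊗ C0 ⟶ C0` with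
`(f ⊗ f_C) ∘ (Δ_A ⊗ id) ⪰ g ⊗ id`. -/
def LaxCtxRed {T C0 : C} (𝒯 : TCC C T C0) {A : C} (f g : A ⟶ T) : Prop :=
  ∃ fC : A ⊗ C0 ⟶ C0,
    𝒯.amb ((GSCat.copy A ▷ C0) ≫ (α_ A A C0).hom ≫ (f ⊗ₘ fC)) (g ▷ C0)

/-! Write `κ u = ctxUpdate u : (a, c) ↦ (a, u (a, c))` for the update of the context `c`
by `u`, so that a witness of `f ⪰^cr g` is a `u` with `κ u ≫ (f ⊗ id) ⪰ g ⊗ id`. Counitality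
of copy makes the update by discarding the identity, which gives reflexivity. Coassociativity
makes updates compose, `κ u ≫ κ v = κ (κ u ≫ v)`; so precomposing a reduction `f ⪰^cr g` with
the update of a reduction `g ⪰^cr h` and chaining with the latter yields `f ⪰^cr h`. -/

def ctxUpdate {A X : C} (u : A ⊗ X ⟶ X) : A ⊗ X ⟶ A ⊗ X :=
  (GSCat.copy A ▷ X) ≫ (α_ A A X).hom ≫ (A ◁ u)

lemma copy_whiskerRight_assoc_tensorHom {A X Y : C} (f : A ⟶ Y) (u : A ⊗ X ⟶ X) :
    (GSCat.copy A ▷ X) ≫ (α_ A A X).hom ≫ (f ⊗ₘ u) = ctxUpdate u ≫ (f ▷ X) := by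
  simp only [ctxUpdate, Category.assoc, tensorHom_def']

lemma ctxUpdate_discard (A X : C) :
    ctxUpdate ((GSCat.discard A ▷ X) ≫ (λ_ X).hom) = 𝟙 (A ⊗ X) := by
  rw [ctxUpdate, MonoidalCategory.whiskerLeft_comp, ← associator_naturality_middle_assoc,
    MonoidalCategory.triangle, ← comp_whiskerRight_assoc, ← comp_whiskerRight,
    Category.assoc, GSCat.copy_counit_right, id_whiskerRight]

lemma ctxUpdate_comp {A X : C} (u v : A ⊗ X ⟶ X) :
    ctxUpdate u ≫ ctxUpdate v = ctxUpdate (ctxUpdate u ≫ v) := by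
  simp only [ctxUpdate, MonoidalCategory.whiskerLeft_comp, Category.assoc]
  rw [whisker_exchange_assoc, associator_naturality_right_assoc,
    ← associator_naturality_left_assoc, ← associator_naturality_middle_assoc,
    ← comp_whiskerRight_assoc, ← comp_whiskerRight_assoc, ← GSCat.copy_assoc]
  simp only [comp_whiskerRight, Category.assoc, MonoidalCategory.pentagon_assoc]

lemma laxCtxRed_iff {T C0 : C} (𝒯 : TCC C T C0) {A : C} (f g : A ⟶ T) :
    LaxCtxRed 𝒯 f g ↔ ∃ fC : A ⊗ C0 ⟶ C0, 𝒯.amb (ctxUpdate fC ≫ (f ▷ C0)) (g ▷ C0) := by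
  simp only [LaxCtxRed, copy_whiskerRight_assoc_tensorHom]

theorem laxCtxRed_is_preorder_general {T C0 : C} (𝒯 : TCC C T C0) {A : C} :
    (∀ f : A ⟶ T, LaxCtxRed 𝒯 f f) ∧
    (∀ f g h : A ⟶ T, LaxCtxRed 𝒯 f g → LaxCtxRed 𝒯 g h → LaxCtxRed 𝒯 f h) := by
  simp only [laxCtxRed_iff]
  refine ⟨fun f => ?_, fun f g h ⟨fC, hfg⟩ ⟨gC, hgh⟩ => ?_⟩
  · refine ⟨(GSCat.discard A ▷ C0) ≫ (λ_ C0).hom, ?_⟩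
    rw [ctxUpdate_discard, Category.id_comp]
    exact 𝒯.amb_refl _
  · refine ⟨ctxUpdate gC ≫ fC, ?_⟩
    rw [← ctxUpdate_comp, Category.assoc]
    exact 𝒯.amb_trans (𝒯.amb_precomp _ hfg) hgh

/-- In any target--context category, the lax context-reduction relation is a
preorder (reflexive and transitive) on every hom-set `C(A, T)`. -/
theorem laxCtxRed_is_preorder [GsNormalizedCat C] {T C0 : C} (𝒯 : TCC C T C0) {A : C} :
    (∀ f : A ⟶ T, LaxCtxRed 𝒯 f f) ∧
    (∀ f g h : A ⟶ T, LaxCtxRed 𝒯 f g → LaxCtxRed 𝒯 g h → LaxCtxRed 𝒯 f h) :=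
  laxCtxRed_is_preorder_general 𝒯
end

section
/- (No-go theorem for universality.) Let (C,T,C₀,⪰) be a target–context category and let φ : C_fun(I,T) → ℝ be monotone with respect to the lax context-reduction preorder ⪰^cr (i.e. t ⪰^cr t' implies φ(t) ≥ φ(t')). Let s : P⊗C₀ → T⊗C₀ be a simulator with compiler s_T and let Im_fun(s_T) be the functional image of s_T. If sup{φ(u) : u ∈ Im_fun(s_T)} < sup{φ(t) : t ∈ C_fun(I,T)} (suprema taken in the extended reals), then s is not a universal simulator. -/
open CategoryTheory MonoidalCategory

universe w v u v' u'

variable {C : Type u} [Category.{v} C] [MonoidalCategory C] [SymmetricCategory C] [GSCat C]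

/-- A simulator: a morphism `s : P ⊗ C0 ⟶ T ⊗ C0` of the form
`s = (s_T ⊗ s_C) ∘ (Δ_P ⊗ id)` with functional compiler `s_T : P ⟶ T` and
context reduction `s_C : P ⊗ C0 ⟶ C0`. -/
structure Simulator {C : Type u} [Category.{v} C] [MonoidalCategory C] [SymmetricCategory C]
    [GSCat C] (T C0 P : C) where
  s : P ⊗ C0 ⟶ T ⊗ C0
  sT : P ⟶ T
  sC : P ⊗ C0 ⟶ C0
  sT_functional : GsFunctional sT
  split : s = (GSCat.copy P ▷ C0) ≫ (α_ P P C0).hom ≫ (sT ⊗ₘ sC)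

/-- A simulator is universal if there is a lax reduction to the trivial simulator:
a functional `r : T ⟶ P` with `s ∘ (r ⊗ id) ⪰ id`. -/
def IsUniversal {T C0 : C} (𝒯 : TCC C T C0) {P : C} (s : Simulator T C0 P) : Prop :=
  ∃ r : T ⟶ P, GsFunctional r ∧ 𝒯.amb ((r ▷ C0) ≫ s.s) (𝟙 (T ⊗ C0))

/-!
If `r` witnesses universality of `s`, precomposing `s ∘ (r ⊗ id) ⪰ id` with a functional state
`t ⊗ id` shows that `s_T ∘ r ∘ t`, a functional state in the image of `s_T`, lax
context-reduces to `t`. By monotonicity `φ` is then at least as large on that image as on any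
functional state, so its supremum there cannot be strictly smaller.
-/

theorem GsFunctional.comp {A B X : C} {f : A ⟶ B} {g : B ⟶ X}
    (hf : GsFunctional f) (hg : GsFunctional g) : GsFunctional (f ≫ g) := by
  unfold GsFunctional at *
  rw [Category.assoc, hg, reassoc_of% hf, tensorHom_comp_tensorHom]

/-- Functionality of `a` is what lets it pass through the copy `Δ_P` inside `s`. -/
theorem Simulator.whiskerRight_comp_s {T C0 P A : C} (s : Simulator T C0 P) {a : A ⟶ P}
    (ha : GsFunctional a) :
    (a ▷ C0) ≫ s.s = (GSCat.copy A ▷ C0) ≫ (α_ A A C0).hom ≫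
      ((a ≫ s.sT) ⊗ₘ ((a ▷ C0) ≫ s.sC)) := by
  have hcopy : (a ▷ C0) ≫ (GSCat.copy P ▷ C0) = (GSCat.copy A ▷ C0) ≫ ((a ⊗ₘ a) ▷ C0) := by
    rw [← comp_whiskerRight, ha, comp_whiskerRight]
  rw [s.split, reassoc_of% hcopy, ← tensorHom_id (a ⊗ₘ a), associator_naturality_assoc,
    tensorHom_comp_tensorHom, tensorHom_id]

theorem IsUniversal.laxCtxRed {T C0 P : C} {𝒯 : TCC C T C0} {s : Simulator T C0 P}
    (hs : IsUniversal 𝒯 s) {A : C} {f : A ⟶ T} (hf : GsFunctional f) :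
    ∃ a : A ⟶ P, GsFunctional a ∧ LaxCtxRed 𝒯 (a ≫ s.sT) f := by
  obtain ⟨r, hr, hamb⟩ := hs
  refine ⟨f ≫ r, hf.comp hr, ((f ≫ r) ▷ C0) ≫ s.sC, ?_⟩
  have h := 𝒯.amb_precomp (f ▷ C0) hamb
  rwa [Category.comp_id, ← comp_whiskerRight_assoc, s.whiskerRight_comp_s (hf.comp hr)] at h

theorem nogo_universality_general {T C0 : C} (𝒯 : TCC C T C0) {P : C}
    (s : Simulator T C0 P) (φ : (𝟙_ C ⟶ T) → ℝ)
    (hmono : ∀ t t' : 𝟙_ C ⟶ T, GsFunctional t → GsFunctional t' →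
      LaxCtxRed 𝒯 t t' → φ t' ≤ φ t)
    (hlt : sSup ((fun t => (φ t : EReal)) ''
        {u : 𝟙_ C ⟶ T | ∃ a : 𝟙_ C ⟶ P, GsFunctional a ∧ u = a ≫ s.sT}) <
      sSup ((fun t => (φ t : EReal)) '' {t : 𝟙_ C ⟶ T | GsFunctional t})) :
    ¬ IsUniversal 𝒯 s := by
  intro hs
  refine hlt.not_ge (sSup_le_sSup_of_isCofinalFor ?_)
  rintro _ ⟨t, ht, rfl⟩
  obtain ⟨a, ha, hred⟩ := hs.laxCtxRed ht
  exact ⟨_, ⟨a ≫ s.sT, ⟨a, ha, rfl⟩, rfl⟩,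
    EReal.coe_le_coe_iff.mpr (hmono _ t (ha.comp s.sT_functional) ht hred)⟩

/-- No-go theorem for universality: if `φ` is monotone on functional states
with respect to lax context-reduction and its supremum over the functional image of the
compiler `s_T` is strictly smaller than its supremum over all functional states of `T`
(in the extended reals), then `s` is not universal. -/
theorem nogo_universality [GsNormalizedCat C] {T C0 : C} (𝒯 : TCC C T C0) {P : C}
    (s : Simulator T C0 P) (φ : (𝟙_ C ⟶ T) → ℝ)
    (hmono : ∀ t t' : 𝟙_ C ⟶ T, GsFunctional t → GsFunctional t' →
      LaxCtxRed 𝒯 t t' → φ t' ≤ φ t)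
    (hlt : sSup ((fun t => (φ t : EReal)) ''
        {u : 𝟙_ C ⟶ T | ∃ a : 𝟙_ C ⟶ P, GsFunctional a ∧ u = a ≫ s.sT}) <
      sSup ((fun t => (φ t : EReal)) '' {t : 𝟙_ C ⟶ T | GsFunctional t})) :
    ¬ IsUniversal 𝒯 s :=
  nogo_universality_general 𝒯 s φ hmono hlt
end

section
/- (Fixed Point Theorem.) Let C be a target–context category with intrinsic behaviors, with evaluation morphism eval : T⊗C₀ → B. If there is a morphism F : C₀⊗C₀ → B that is an A-complete parametrization of maps C₀ → B for some object A, then every morphism g : B → B has a quasi-fixed point b : A → B; namely, b := F∘Δ_{C₀}∘c_f is such a quasi-fixed point, where c_f : A → C₀ is the functional morphism parametrizing f := g∘F∘Δ_{C₀} (suitably precomposed to have source A⊗C₀). -/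
open CategoryTheory MonoidalCategory

universe w v u v' u'

variable {C : Type u} [Category.{v} C] [MonoidalCategory C] [SymmetricCategory C] [GSCat C]

/-- A target--context category with intrinsic behaviors: a behavior structure (a lax
gs-monoidal functor to `Rel`, encoded concretely) for which the evaluation is the shadow
of a morphism `eval : T ⊗ C0 ⟶ B` of the ambient category, i.e. `Beh(eval)` is the
(graph of the) function `evalHat`, together with a preorder `brel` on `Beh(B)`. -/
structure IntrinsicBS (C : Type u) [Category.{v} C] [MonoidalCategory C]
    [SymmetricCategory C] [GSCat C] (T C0 B : C) where
  obj : C → Type w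
  map : ∀ {A X : C}, (A ⟶ X) → obj A → Set (obj X)
  map_id : ∀ {A : C} (a : obj A), map (𝟙 A) a = {a}
  map_comp : ∀ {A X Y : C} (f : A ⟶ X) (g : X ⟶ Y) (a : obj A),
    map (f ≫ g) a = {y | ∃ x ∈ map f a, y ∈ map g x}
  unitSet : Set (obj (𝟙_ C))
  mul : ∀ A X : C, obj A → obj X → Set (obj (A ⊗ X))
  mul_natural : ∀ {A A' X X' : C} (f : A ⟶ A') (g : X ⟶ X')
      (a : obj A) (x : obj X) (y : obj (A' ⊗ X')),
    (∃ a' ∈ map f a, ∃ x' ∈ map g x, y ∈ mul A' X' a' x') ↔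
      ∃ z ∈ mul A X a x, y ∈ map (f ⊗ₘ g) z
  mul_assoc : ∀ {A X Y : C} (a : obj A) (x : obj X) (y : obj Y) (u : obj (A ⊗ (X ⊗ Y))),
    (∃ z ∈ mul A X a x, ∃ v ∈ mul (A ⊗ X) Y z y, u ∈ map (α_ A X Y).hom v) ↔
      ∃ t ∈ mul X Y x y, u ∈ mul A (X ⊗ Y) a t
  mul_left_unit : ∀ {A : C} (a b : obj A),
    (∃ i ∈ unitSet, ∃ z ∈ mul (𝟙_ C) A i a, b ∈ map (λ_ A).hom z) ↔ b = a
  mul_right_unit : ∀ {A : C} (a b : obj A),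
    (∃ i ∈ unitSet, ∃ z ∈ mul A (𝟙_ C) a i, b ∈ map (ρ_ A).hom z) ↔ b = a
  mul_braiding : ∀ {A X : C} (a : obj A) (x : obj X) (u : obj (X ⊗ A)),
    (∃ z ∈ mul A X a x, u ∈ map (β_ A X).hom z) ↔ u ∈ mul X A x a
  map_copy : ∀ {A : C} (a : obj A), map (GSCat.copy A) a = mul A A a a
  map_discard : ∀ {A : C} (a : obj A), map (GSCat.discard A) a = unitSet
  eval : T ⊗ C0 ⟶ B
  evalHat : obj (T ⊗ C0) → obj B
  eval_beh : ∀ x : obj (T ⊗ C0), map eval x = {evalHat x}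
  brel : obj B → obj B → Prop
  brel_refl : ∀ b : obj B, brel b b
  brel_trans : ∀ {b₁ b₂ b₃ : obj B}, brel b₁ b₂ → brel b₂ b₃ → brel b₁ b₃

/-- The ambient imitation relation induced by an intrinsic behavior structure. -/
def IntrinsicBS.aim {T C0 B : C} (β : IntrinsicBS C T C0 B) {A : C}
    (f g : A ⟶ T ⊗ C0) : Prop :=
  Imitates β.brel (fun a => β.evalHat '' β.map f a) (fun a => β.evalHat '' β.map g a)

/-- `F : P ⊗ C0 ⟶ B` is an `A`-complete parametrization of maps `C0 → B` if every
`f : A ⊗ C0 ⟶ B` is parametrized, up to imitation, by a functional `p : A ⟶ P`. -/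
def IntrinsicBS.IsCompleteParam {T C0 B : C} (β : IntrinsicBS C T C0 B) (A P : C)
    (F : P ⊗ C0 ⟶ B) : Prop :=
  ∀ f : A ⊗ C0 ⟶ B, ∃ p : A ⟶ P, GsFunctional p ∧
    Imitates β.brel (β.map ((p ▷ C0) ≫ F)) (β.map f)

/-- `b : A ⟶ B` is a quasi-fixed point of `g : B ⟶ B` if `Beh(b) ⪰ᵢₘ Beh(g ∘ b)`. -/
def IntrinsicBS.QuasiFixed {T C0 B : C} (β : IntrinsicBS C T C0 B) {A : C}
    (b : A ⟶ B) (g : B ⟶ B) : Prop :=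
  Imitates β.brel (β.map b) (β.map (b ≫ g))

section FixedPointHelpers

lemma isEnh_of_forall {X : Type w} {pre : X → X → Prop} {U V : Set X}
    (h : ∀ u ∈ U, ∃ v ∈ V, pre v u) : IsEnh pre U V :=
  ⟨fun u => ⟨(h u u.2).choose, (h u u.2).choose_spec.1⟩, fun u => (h u u.2).choose_spec.2⟩

lemma isDeg_of_forall {X : Type w} {pre : X → X → Prop} {U V : Set X}
    (h : ∀ v ∈ V, ∃ u ∈ U, pre v u) : IsDeg pre U V :=
  ⟨fun v => ⟨(h v v.2).choose, (h v v.2).choose_spec.1⟩, fun v => (h v v.2).choose_spec.2⟩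

lemma exists_of_isEnh {X : Type w} {pre : X → X → Prop} {U V : Set X}
    (h : IsEnh pre U V) : ∀ u ∈ U, ∃ v ∈ V, pre v u := by
  obtain ⟨e, he⟩ := h
  exact fun u hu => ⟨e ⟨u, hu⟩, (e ⟨u, hu⟩).2, he ⟨u, hu⟩⟩

lemma exists_of_isDeg {X : Type w} {pre : X → X → Prop} {U V : Set X}
    (h : IsDeg pre U V) : ∀ v ∈ V, ∃ u ∈ U, pre v u := by
  obtain ⟨d, hd⟩ := h
  exact fun v hv => ⟨d ⟨v, hv⟩, (d ⟨v, hv⟩).2, hd ⟨v, hv⟩⟩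

lemma gs_discard_whiskerRight_left (X Y : C) :
    (GSCat.discard X ▷ Y) ≫ (λ_ Y).hom ≫ GSCat.discard Y = GSCat.discard (X ⊗ Y) := by
  rw [GSCat.discard_tensor, MonoidalCategory.tensorHom_def, Category.assoc,
    MonoidalCategory.leftUnitor_naturality]

lemma gs_discard_whiskerLeft_right (X Y : C) :
    (X ◁ GSCat.discard Y) ≫ (ρ_ X).hom ≫ GSCat.discard X = GSCat.discard (X ⊗ Y) := by
  rw [GSCat.discard_tensor, MonoidalCategory.tensorHom_def', Category.assoc,
    MonoidalCategory.unitors_equal, ← MonoidalCategory.rightUnitor_naturality]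

variable {T C0 B : C} (β : IntrinsicBS.{w} C T C0 B)

lemma IBS_mem_map_comp {A X Y : C} (f : A ⟶ X) (g : X ⟶ Y) (a : β.obj A) (y : β.obj Y) :
    y ∈ β.map (f ≫ g) a ↔ ∃ x ∈ β.map f a, y ∈ β.map g x := by
  rw [β.map_comp]; rfl

lemma IBS_unit_nonempty {X : C} (x : β.obj X) : β.unitSet.Nonempty := by
  obtain ⟨i, hi, -⟩ := (β.mul_left_unit x x).mpr rfl
  exact ⟨i, hi⟩

lemma IBS_mul_nonempty {X Y : C} (x : β.obj X) (y : β.obj Y) :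
    (β.mul X Y x y).Nonempty := by
  obtain ⟨i, hi, z, hz, -⟩ := (β.mul_left_unit y y).mpr rfl
  obtain ⟨w, hw, -⟩ := (β.mul_natural (GSCat.discard X) (𝟙 Y) x y z).mp
    ⟨i, by rw [β.map_discard]; exact hi, y, by rw [β.map_id]; exact rfl, hz⟩
  exact ⟨w, hw⟩

lemma IBS_proj_right {X Y : C} {x : β.obj X} {y : β.obj Y} {z : β.obj (X ⊗ Y)}
    (hz : z ∈ β.mul X Y x y) :
    β.map ((GSCat.discard X ▷ Y) ≫ (λ_ Y).hom) z = {y} := by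
  have hub : ∀ c' ∈ β.map ((GSCat.discard X ▷ Y) ≫ (λ_ Y).hom) z, c' = y := by
    intro c' hc'
    rw [IBS_mem_map_comp] at hc'
    obtain ⟨w, hw, hc'⟩ := hc'
    have hw' : w ∈ β.map (GSCat.discard X ⊗ₘ 𝟙 Y) z := by
      rwa [MonoidalCategory.tensorHom_id]
    obtain ⟨i, hi, y', hy', hwm⟩ :=
      (β.mul_natural (GSCat.discard X) (𝟙 Y) x y w).mpr ⟨z, hz, hw'⟩
    rw [β.map_discard] at hi
    rw [β.map_id, Set.mem_singleton_iff] at hy'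
    subst hy'
    exact (β.mul_left_unit y' c').mp ⟨i, hi, w, hwm, hc'⟩
  have hne : (β.map ((GSCat.discard X ▷ Y) ≫ (λ_ Y).hom) z).Nonempty := by
    have h1 : β.map (((GSCat.discard X ▷ Y) ≫ (λ_ Y).hom) ≫ GSCat.discard Y) z
        = β.unitSet := by
      rw [Category.assoc, gs_discard_whiskerRight_left, β.map_discard]
    obtain ⟨i, hi⟩ := IBS_unit_nonempty β y
    have h2 : i ∈ β.map (((GSCat.discard X ▷ Y) ≫ (λ_ Y).hom) ≫ GSCat.discard Y) z := by
      rw [h1]; exact hi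
    rw [IBS_mem_map_comp] at h2
    obtain ⟨c', hc', -⟩ := h2
    exact ⟨c', hc'⟩
  ext c'
  simp only [Set.mem_singleton_iff]
  constructor
  · exact hub c'
  · rintro rfl
    obtain ⟨c'', hc''⟩ := hne
    rwa [hub c'' hc''] at hc''

lemma IBS_proj_left {X Y : C} {x : β.obj X} {y : β.obj Y} {z : β.obj (X ⊗ Y)}
    (hz : z ∈ β.mul X Y x y) :
    β.map ((X ◁ GSCat.discard Y) ≫ (ρ_ X).hom) z = {x} := by
  have hub : ∀ c' ∈ β.map ((X ◁ GSCat.discard Y) ≫ (ρ_ X).hom) z, c' = x := by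
    intro c' hc'
    rw [IBS_mem_map_comp] at hc'
    obtain ⟨w, hw, hc'⟩ := hc'
    have hw' : w ∈ β.map (𝟙 X ⊗ₘ GSCat.discard Y) z := by
      rwa [MonoidalCategory.id_tensorHom]
    obtain ⟨x', hx', i, hi, hwm⟩ :=
      (β.mul_natural (𝟙 X) (GSCat.discard Y) x y w).mpr ⟨z, hz, hw'⟩
    rw [β.map_discard] at hi
    rw [β.map_id, Set.mem_singleton_iff] at hx'
    subst hx'
    exact (β.mul_right_unit x' c').mp ⟨i, hi, w, hwm, hc'⟩
  have hne : (β.map ((X ◁ GSCat.discard Y) ≫ (ρ_ X).hom) z).Nonempty := by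
    have h1 : β.map (((X ◁ GSCat.discard Y) ≫ (ρ_ X).hom) ≫ GSCat.discard X) z
        = β.unitSet := by
      rw [Category.assoc, gs_discard_whiskerLeft_right, β.map_discard]
    obtain ⟨i, hi⟩ := IBS_unit_nonempty β y
    have h2 : i ∈ β.map (((X ◁ GSCat.discard Y) ≫ (ρ_ X).hom) ≫ GSCat.discard X) z := by
      rw [h1]; exact hi
    rw [IBS_mem_map_comp] at h2
    obtain ⟨c', hc', -⟩ := h2
    exact ⟨c', hc'⟩
  ext c'
  simp only [Set.mem_singleton_iff]
  constructor
  · exact hub c'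
  · rintro rfl
    obtain ⟨c'', hc''⟩ := hne
    rwa [hub c'' hc''] at hc''

lemma IBS_functional_subsingleton {A X : C} {cf : A ⟶ X} (hf : GsFunctional cf)
    (a : β.obj A) {c₁ c₂ : β.obj X} (h₁ : c₁ ∈ β.map cf a) (h₂ : c₂ ∈ β.map cf a) :
    c₁ = c₂ := by
  obtain ⟨w, hw⟩ := IBS_mul_nonempty β c₁ c₂
  have hw2 : w ∈ β.map (cf ≫ GSCat.copy X) a := by
    rw [hf, IBS_mem_map_comp]
    obtain ⟨z, hz, hwz⟩ := (β.mul_natural cf cf a a w).mp ⟨c₁, h₁, c₂, h₂, hw⟩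
    exact ⟨z, by rw [β.map_copy]; exact hz, hwz⟩
  rw [IBS_mem_map_comp] at hw2
  obtain ⟨c₃, hc₃, hwc₃⟩ := hw2
  rw [β.map_copy] at hwc₃
  have e1 := IBS_proj_right β hw
  have e2 := IBS_proj_right β hwc₃
  have e3 := IBS_proj_left β hw
  have e4 := IBS_proj_left β hwc₃
  have hc2 : c₂ = c₃ := by
    have m : c₂ ∈ β.map ((GSCat.discard X ▷ X) ≫ (λ_ X).hom) w := by
      rw [e1]; exact Set.mem_singleton _
    rw [e2] at m; exact m
  have hc1 : c₁ = c₃ := by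
    have m : c₁ ∈ β.map ((X ◁ GSCat.discard X) ≫ (ρ_ X).hom) w := by
      rw [e3]; exact Set.mem_singleton _
    rw [e4] at m; exact m
  exact hc1.trans hc2.symm

end FixedPointHelpers

/-- Fixed Point Theorem: in a target--context category with intrinsic
behaviors, if `F : C0 ⊗ C0 ⟶ B` is an `A`-complete parametrization of maps `C0 → B`,
then every `g : B ⟶ B` has a quasi-fixed point; in fact `F ∘ Δ ∘ c_f` is one, for any
functional `c_f` parametrizing `f := g ∘ F ∘ Δ` (precomposed to have source `A ⊗ C0`). -/
theorem fixed_point_theorem [GsNormalizedCat C] {T C0 B : C} (β : IntrinsicBS C T C0 B)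
    {A : C} (F : C0 ⊗ C0 ⟶ B) (hF : β.IsCompleteParam A C0 F) (g : B ⟶ B) :
    (∃ b : A ⟶ B, β.QuasiFixed b g) ∧
    (∀ cf : A ⟶ C0, GsFunctional cf →
      Imitates β.brel (β.map ((cf ▷ C0) ≫ F))
        (β.map ((GSCat.discard A ▷ C0) ≫ (λ_ C0).hom ≫ GSCat.copy C0 ≫ F ≫ g)) →
      β.QuasiFixed (cf ≫ GSCat.copy C0 ≫ F) g) := by
  have key : ∀ cf : A ⟶ C0, GsFunctional cf →
      Imitates β.brel (β.map ((cf ▷ C0) ≫ F))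
        (β.map ((GSCat.discard A ▷ C0) ≫ (λ_ C0).hom ≫ GSCat.copy C0 ≫ F ≫ g)) →
      β.QuasiFixed (cf ≫ GSCat.copy C0 ≫ F) g := by
    intro cf hfun H
    have hb : ∀ (a : β.obj A) (v : β.obj B),
        v ∈ β.map (cf ≫ GSCat.copy C0 ≫ F) a ↔
        ∃ c ∈ β.map cf a, ∃ w ∈ β.mul C0 C0 c c, v ∈ β.map F w := by
      intro a v
      simp only [IBS_mem_map_comp β, β.map_copy]
    have hbg : ∀ (a : β.obj A) (u : β.obj B),
        u ∈ β.map ((cf ≫ GSCat.copy C0 ≫ F) ≫ g) a ↔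
        ∃ c ∈ β.map cf a, ∃ w ∈ β.mul C0 C0 c c, ∃ v ∈ β.map F w, u ∈ β.map g v := by
      intro a u
      simp only [Category.assoc, IBS_mem_map_comp β, β.map_copy]
    have hmu : ∀ (a : β.obj A) (c : β.obj C0) (z : β.obj (A ⊗ C0)), z ∈ β.mul A C0 a c →
        ∀ u : β.obj B,
        u ∈ β.map ((GSCat.discard A ▷ C0) ≫ (λ_ C0).hom ≫ GSCat.copy C0 ≫ F ≫ g) z ↔
        ∃ w ∈ β.mul C0 C0 c c, ∃ v ∈ β.map F w, u ∈ β.map g v := by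
      intro a c z hz u
      have e : (GSCat.discard A ▷ C0) ≫ (λ_ C0).hom ≫ GSCat.copy C0 ≫ F ≫ g
          = ((GSCat.discard A ▷ C0) ≫ (λ_ C0).hom) ≫ (GSCat.copy C0 ≫ F ≫ g) := by
        simp only [Category.assoc]
      rw [e, IBS_mem_map_comp β]
      constructor
      · rintro ⟨c', hc', hu⟩
        rw [IBS_proj_right β hz, Set.mem_singleton_iff] at hc'
        subst hc'
        simpa only [IBS_mem_map_comp β, β.map_copy] using hu
      · intro h
        refine ⟨c, by rw [IBS_proj_right β hz]; exact Set.mem_singleton _, ?_⟩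
        simpa only [IBS_mem_map_comp β, β.map_copy] using h
    intro a hne
    obtain ⟨u₀, hu₀⟩ := hne
    rw [hbg] at hu₀
    obtain ⟨c, hc, w₀, hw₀, v₀, hv₀, hu₀g⟩ := hu₀
    constructor
    · apply isEnh_of_forall
      intro u hu
      rw [hbg] at hu
      obtain ⟨c₁, hc₁, w, hw, v, hv, hug⟩ := hu
      obtain ⟨z₀, hz₀⟩ := IBS_mul_nonempty β a c₁
      have humem : u ∈ β.map
          ((GSCat.discard A ▷ C0) ≫ (λ_ C0).hom ≫ GSCat.copy C0 ≫ F ≫ g) z₀ :=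
        (hmu a c₁ z₀ hz₀ u).mpr ⟨w, hw, v, hv, hug⟩
      obtain ⟨henh, -⟩ := H z₀ ⟨u, humem⟩
      obtain ⟨v', hv', hrel⟩ := exists_of_isEnh henh u humem
      refine ⟨v', ?_, hrel⟩
      rw [IBS_mem_map_comp β] at hv'
      obtain ⟨w', hw', hv'F⟩ := hv'
      have hw'' : w' ∈ β.map (cf ⊗ₘ 𝟙 C0) z₀ := by
        rwa [MonoidalCategory.tensorHom_id]
      obtain ⟨c', hc', c'', hc'', hw'm⟩ := (β.mul_natural cf (𝟙 C0) a c₁ w').mpr ⟨z₀, hz₀, hw''⟩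
      rw [β.map_id, Set.mem_singleton_iff] at hc''
      subst hc''
      have hcc : c' = c'' := IBS_functional_subsingleton β hfun a hc' hc₁
      rw [hcc] at hw'm
      exact (hb a v').mpr ⟨c'', hc₁, w', hw'm, hv'F⟩
    · apply isDeg_of_forall
      intro v hv
      rw [hb] at hv
      obtain ⟨c₂, hc₂, w, hw, hvF⟩ := hv
      obtain ⟨z₁, hz₁, hwz₁⟩ := (β.mul_natural cf (𝟙 C0) a c₂ w).mp
        ⟨c₂, hc₂, c₂, by rw [β.map_id]; exact rfl, hw⟩
      have hcc : c = c₂ := IBS_functional_subsingleton β hfun a hc hc₂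
      rw [hcc] at hw₀
      have hu₀mem : u₀ ∈ β.map
          ((GSCat.discard A ▷ C0) ≫ (λ_ C0).hom ≫ GSCat.copy C0 ≫ F ≫ g) z₁ :=
        (hmu a c₂ z₁ hz₁ u₀).mpr ⟨w₀, hw₀, v₀, hv₀, hu₀g⟩
      obtain ⟨-, hdeg⟩ := H z₁ ⟨u₀, hu₀mem⟩
      have hvν : v ∈ β.map ((cf ▷ C0) ≫ F) z₁ := by
        rw [IBS_mem_map_comp β]
        refine ⟨w, ?_, hvF⟩
        rw [← MonoidalCategory.tensorHom_id]
        exact hwz₁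
      obtain ⟨u, hu, hrel⟩ := exists_of_isDeg hdeg v hvν
      rw [hmu a c₂ z₁ hz₁ u] at hu
      obtain ⟨w', hw', v', hv', hug⟩ := hu
      exact ⟨u, (hbg a u).mpr ⟨c₂, hc₂, w', hw', v', hv', hug⟩, hrel⟩
  refine ⟨?_, key⟩
  obtain ⟨cf, hfun, him⟩ :=
    hF ((GSCat.discard A ▷ C0) ≫ (λ_ C0).hom ≫ GSCat.copy C0 ≫ F ≫ g)
  exact ⟨cf ≫ GSCat.copy C0 ≫ F, key cf hfun him⟩
end

section
/- (Fixed Point Theorem without behaviors.) Let C be a gs-monoidal category with objects A, C₀, B, and let F : C₀⊗C₀ → B be a morphism such that for every f : A⊗C₀ → B there exists a functional morphism c_f : A → C₀ with F∘(c_f⊗id_{C₀}) = f. Then every morphism g : B → B has a fixed point: there exists b : A → B with g∘b = b. -/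
open CategoryTheory MonoidalCategory

universe w v u v' u'

variable {C : Type u} [Category.{v} C] [MonoidalCategory C] [SymmetricCategory C] [GSCat C]

/-! Lawvere's diagonal argument. Encode `fun a c => g (F (c, c))`, i.e. the morphism
`f = (ε_A ⊗ id) ≫ λ ≫ Δ ≫ F ≫ g`, as `(c_f ⊗ id) ≫ F`, and evaluate `F` on the diagonal of
`c_f`: the point `b = Δ_A ≫ (c_f ⊗ c_f) ≫ F`. Functionality of `c_f` is what lets the copy of `a`
fed to the second factor be replaced by a copy of `c_f a`, which turns `b` into `b ≫ g`. -/

namespace GSCat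

theorem copy_discard_tensorHom_leftUnitor {A X : C} (h : A ⟶ X) :
    copy A ≫ (discard A ⊗ₘ h) ≫ (λ_ X).hom = h := by
  rw [tensorHom_def_assoc, leftUnitor_naturality]
  simpa using copy_counit_left A =≫ h

end GSCat

/-- Fixed Point Theorem without behaviors: in a gs-monoidal category, if
every `f : A ⊗ C0 ⟶ B` is of the form `F ∘ (c_f ⊗ id)` for some functional `c_f : A ⟶ C0`,
then every `g : B ⟶ B` has a fixed point `b : A ⟶ B` with `g ∘ b = b`. -/
theorem fixed_point_theorem_plain {A C0 B : C} (F : C0 ⊗ C0 ⟶ B)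
    (hF : ∀ f : A ⊗ C0 ⟶ B, ∃ cf : A ⟶ C0, GsFunctional cf ∧ (cf ▷ C0) ≫ F = f)
    (g : B ⟶ B) : ∃ b : A ⟶ B, b ≫ g = b := by
  obtain ⟨c, hc_fun, hc⟩ :=
    hF ((GSCat.discard A ▷ C0) ≫ (λ_ C0).hom ≫ GSCat.copy C0 ≫ F ≫ g)
  refine ⟨GSCat.copy A ≫ (c ⊗ₘ c) ≫ F, ?_⟩
  calc (GSCat.copy A ≫ (c ⊗ₘ c) ≫ F) ≫ g
      = c ≫ GSCat.copy C0 ≫ F ≫ g := by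
        rw [Category.assoc, Category.assoc, ← reassoc_of% hc_fun]
    _ = GSCat.copy A ≫ (GSCat.discard A ⊗ₘ c) ≫ (λ_ C0).hom ≫ GSCat.copy C0 ≫ F ≫ g := by
        rw [reassoc_of% GSCat.copy_discard_tensorHom_leftUnitor]
    _ = GSCat.copy A ≫ (c ⊗ₘ c) ≫ F := by
        rw [tensorHom_def', tensorHom_def', Category.assoc, Category.assoc, hc]
end

section
/- (Quasi-fixed points and simulators.) Let C be a target–context category with intrinsic behaviors whose evaluation morphism eval : T⊗C₀ → B is an A-complete parametrization of maps C₀ → B. If there exists a universal simulator s of type C₀⊗C₀ → T⊗C₀ (i.e. with programs P = C₀), then every morphism g : B → B has a quasi-fixed point b : A → B. -/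
open CategoryTheory MonoidalCategory

universe w v u v' u'

variable {C : Type u} [Category.{v} C] [MonoidalCategory C] [SymmetricCategory C] [GSCat C]

/-- Universality of a simulator with respect to the ambient imitation relation induced by an
intrinsic behavior structure. -/
def IntrinsicBS.IsUniversal {T C0 B : C} (β : IntrinsicBS C T C0 B) {P : C}
    (s : Simulator T C0 P) : Prop :=
  ∃ r : T ⟶ P, GsFunctional r ∧ β.aim ((r ▷ C0) ≫ s.s) (𝟙 (T ⊗ C0))

/-!
A diagonal argument in the style of Lawvere's fixed-point theorem. Let `k c = g (eval (s (c, c)))`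
be the diagonal of the universal simulator. Completeness of `eval` yields a program `t a` whose
evaluation imitates `(a, c) ↦ k c`, and universality compiles it back into a context
`c = r (t a)`, so that `eval (s (c, c)) ⪰ eval (t a, c) ⪰ k c = g (eval (s (c, c)))`.
The context is restricted to the domain of `k` (through `gsDom k`, which commutes with copying):
imitation only survives precomposition by morphisms landing where the imitated relation is
defined, and this is what keeps the degradation half of the argument alive.
-/

open GSCat

section Imitation

variable {α γ X : Type*} {pre : X → X → Prop} {ν μ κ : α → Set X}

theorem imitates_iff :
    Imitates pre ν μ ↔ ∀ a, (μ a).Nonempty →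
      (∀ u ∈ μ a, ∃ v ∈ ν a, pre v u) ∧ (∀ v ∈ ν a, ∃ u ∈ μ a, pre v u) := by
  refine forall₂_congr fun a _ => and_congr ⟨?_, fun h => ?_⟩ ⟨?_, fun h => ?_⟩
  · rintro ⟨e, he⟩ u hu
    exact ⟨e ⟨u, hu⟩, (e _).2, he _⟩
  · choose e he using h
    exact ⟨fun u => ⟨e u u.2, (he u u.2).1⟩, fun u => (he u u.2).2⟩
  · rintro ⟨d, hd⟩ v hv
    exact ⟨d ⟨v, hv⟩, (d _).2, hd ⟨v, hv⟩⟩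
  · choose d hd using h
    exact ⟨fun v => ⟨d v v.2, (hd v v.2).1⟩, fun v => (hd v v.2).2⟩

theorem Imitates.trans (h₁ : Imitates pre ν μ) (h₂ : Imitates pre μ κ)
    (htrans : ∀ {x y z}, pre x y → pre y z → pre x z) : Imitates pre ν κ := by
  rw [imitates_iff] at *
  intro a ⟨u₀, hu₀⟩
  obtain ⟨enh₂, deg₂⟩ := h₂ a ⟨u₀, hu₀⟩
  obtain ⟨v₀, hv₀, -⟩ := enh₂ u₀ hu₀
  obtain ⟨enh₁, deg₁⟩ := h₁ a ⟨v₀, hv₀⟩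
  refine ⟨fun u hu => ?_, fun w hw => ?_⟩
  · obtain ⟨v, hv, hvu⟩ := enh₂ u hu
    obtain ⟨w, hw, hwv⟩ := enh₁ v hv
    exact ⟨w, hw, htrans hwv hvu⟩
  · obtain ⟨v, hv, hwv⟩ := deg₁ w hw
    obtain ⟨u, hu, hvu⟩ := deg₂ v hv
    exact ⟨u, hu, htrans hwv hvu⟩

theorem Imitates.rComp (h : Imitates pre ν μ) (f : γ → Set α)
    (hμ : ∀ c, ∀ a ∈ f c, (μ a).Nonempty) : Imitates pre (RComp f ν) (RComp f μ) := by
  rw [imitates_iff] at *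
  refine fun c _ => ⟨?_, ?_⟩
  · rintro u ⟨a, ha, hu⟩
    obtain ⟨v, hv, hvu⟩ := (h a ⟨u, hu⟩).1 u hu
    exact ⟨v, ⟨a, ha, hv⟩, hvu⟩
  · rintro v ⟨a, ha, hv⟩
    obtain ⟨u, hu, hvu⟩ := (h a (hμ c a ha)).2 v hv
    exact ⟨u, ⟨a, ha, hu⟩, hvu⟩

end Imitation

def gsSnd (A X : C) : A ⊗ X ⟶ X := (discard A ▷ X) ≫ (λ_ X).hom

theorem gsTotal_gsSnd (A X : C) : GsTotal (gsSnd A X) := by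
  rw [GsTotal, gsSnd, discard_tensor, MonoidalCategory.tensorHom_def, Category.assoc,
    Category.assoc, leftUnitor_naturality]

theorem copy_whiskerLeft_gsSnd {A X : C} (u : A ⟶ X) :
    copy A ≫ (A ◁ u) ≫ gsSnd A X = u := by
  rw [gsSnd, whisker_exchange_assoc, leftUnitor_naturality, reassoc_of% (copy_counit_left A)]

theorem GsFunctional.comp_s16 {A X Y : C} {p : A ⟶ X} {q : X ⟶ Y}
    (hp : GsFunctional p) (hq : GsFunctional q) : GsFunctional (p ≫ q) := by
  rw [GsFunctional, Category.assoc, hq, reassoc_of% hp, tensorHom_comp_tensorHom]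

theorem copy_whiskerLeft_gsDom {X Y : C} (k : X ⟶ Y) :
    copy X ≫ (X ◁ gsDom k) = gsDom k ≫ copy X := by
  set e := k ≫ discard Y
  calc copy X ≫ (X ◁ (copy X ≫ (X ◁ e) ≫ (ρ_ X).hom))
      = copy X ≫ (copy X ▷ X) ≫ (α_ X X X).hom ≫ (X ◁ (X ◁ e)) ≫ (X ◁ (ρ_ X).hom) := by
        rw [reassoc_of% (copy_assoc X)]
        simp only [MonoidalCategory.whiskerLeft_comp]
    _ = copy X ≫ (copy X ▷ X) ≫ ((X ⊗ X) ◁ e) ≫ (ρ_ (X ⊗ X)).hom := by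
        rw [← associator_naturality_right_assoc, whiskerLeft_rightUnitor, Iso.hom_inv_id_assoc]
    _ = (copy X ≫ (X ◁ e) ≫ (ρ_ X).hom) ≫ copy X := by
        rw [← whisker_exchange_assoc, rightUnitor_naturality]
        simp only [Category.assoc]

theorem GsFunctional.copy_whiskerLeft_comp_whiskerRight {A X : C} {p : A ⟶ X}
    (hp : GsFunctional p) {d : X ⟶ X} (hd : copy X ≫ (X ◁ d) = d ≫ copy X) :
    copy A ≫ (A ◁ (p ≫ d)) ≫ (p ▷ X) = p ≫ d ≫ copy X := by
  rw [MonoidalCategory.whiskerLeft_comp, Category.assoc, whisker_exchange,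
    ← tensorHom_def'_assoc, ← reassoc_of% hp, hd]

namespace IntrinsicBS

variable {T C0 B : C} (β : IntrinsicBS C T C0 B)

theorem map_comp_eq_rComp {A X Y : C} (f : A ⟶ X) (g : X ⟶ Y) :
    β.map (f ≫ g) = RComp (β.map f) (β.map g) :=
  funext (β.map_comp f g)

theorem map_comp_eval {A : C} (f : A ⟶ T ⊗ C0) :
    β.map (f ≫ β.eval) = fun a => β.evalHat '' β.map f a := by
  ext a
  simp [β.map_comp, β.eval_beh, eq_comm]

theorem aim_iff {A : C} (f g : A ⟶ T ⊗ C0) :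
    β.aim f g ↔ Imitates β.brel (β.map (f ≫ β.eval)) (β.map (g ≫ β.eval)) := by
  rw [aim, map_comp_eval, map_comp_eval]

theorem unitSet_nonempty {A : C} (a : β.obj A) : β.unitSet.Nonempty := by
  obtain ⟨i, hi, -⟩ := (β.mul_left_unit a a).mpr rfl
  exact ⟨i, hi⟩

theorem map_nonempty_of_gsTotal {A X : C} {f : A ⟶ X} (hf : GsTotal f) (a : β.obj A) :
    (β.map f a).Nonempty := by
  obtain ⟨i, hi⟩ := β.unitSet_nonempty a
  rw [← β.map_discard a, ← hf, β.map_comp] at hi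
  obtain ⟨x, hx, -⟩ := hi
  exact ⟨x, hx⟩

theorem mem_mul_whiskerRight_iff {A A' X : C} (p : A ⟶ A') (a : β.obj A)
    (x : β.obj X) (y : β.obj (A' ⊗ X)) :
    (∃ a' ∈ β.map p a, y ∈ β.mul A' X a' x) ↔
      ∃ z ∈ β.mul A X a x, y ∈ β.map (p ▷ X) z := by
  simpa [β.map_id] using β.mul_natural p (𝟙 X) a x y

theorem mem_mul_whiskerLeft_iff {A X X' : C} (p : X ⟶ X') (a : β.obj A)
    (x : β.obj X) (y : β.obj (A ⊗ X')) :
    (∃ x' ∈ β.map p x, y ∈ β.mul A X' a x') ↔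
      ∃ z ∈ β.mul A X a x, y ∈ β.map (A ◁ p) z := by
  simpa [β.map_id] using β.mul_natural (𝟙 A) p a x y

theorem exists_mem_mul_of_mem_map_copy_whiskerLeft {A X : C} {u : A ⟶ X} {a : β.obj A}
    {ξ : β.obj (A ⊗ X)} (hξ : ξ ∈ β.map (copy A ≫ (A ◁ u)) a) :
    ∃ c ∈ β.map u a, ξ ∈ β.mul A X a c := by
  rw [β.map_comp] at hξ
  obtain ⟨z, hz, hξ⟩ := hξ
  rw [β.map_copy] at hz
  exact (β.mem_mul_whiskerLeft_iff u a a ξ).mpr ⟨z, hz, hξ⟩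

theorem map_gsSnd_of_mem_mul {A X : C} {a : β.obj A} {x : β.obj X} {ξ : β.obj (A ⊗ X)}
    (hξ : ξ ∈ β.mul A X a x) : β.map (gsSnd A X) ξ = {x} := by
  refine Set.eq_singleton_iff_nonempty_unique_mem.mpr
    ⟨β.map_nonempty_of_gsTotal (gsTotal_gsSnd A X) ξ, fun y hy => ?_⟩
  rw [gsSnd, β.map_comp] at hy
  obtain ⟨y₀, hy₀, hy⟩ := hy
  obtain ⟨i, hi, hy₀⟩ := (β.mem_mul_whiskerRight_iff (discard A) a x y₀).mpr ⟨ξ, hξ, hy₀⟩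
  rw [β.map_discard] at hi
  exact (β.mul_left_unit x y).mp ⟨i, hi, y₀, hy₀, hy⟩

theorem eq_of_mem_map_gsDom {X Y : C} {k : X ⟶ Y} {c c' : β.obj X}
    (h : c' ∈ β.map (gsDom k) c) : c' = c ∧ (β.map k c).Nonempty := by
  rw [gsDom, β.map_comp, β.map_copy] at h
  obtain ⟨z, hz, h⟩ := h
  rw [β.map_comp] at h
  obtain ⟨y, hy, hc'⟩ := h
  obtain ⟨i, hi, hy⟩ := (β.mem_mul_whiskerLeft_iff (k ≫ discard Y) c c y).mpr ⟨z, hz, hy⟩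
  rw [β.map_comp] at hi
  obtain ⟨w, hw, hi⟩ := hi
  rw [β.map_discard] at hi
  exact ⟨(β.mul_right_unit c c').mp ⟨i, hi, y, hy, hc'⟩, w, hw⟩

theorem map_gsSnd_comp_nonempty {A X Y : C} (p : A ⟶ X) (k : X ⟶ Y) {a : β.obj A}
    {ξ : β.obj (A ⊗ X)} (hξ : ξ ∈ β.map (copy A ≫ (A ◁ (p ≫ gsDom k))) a) :
    (β.map (gsSnd A X ≫ k) ξ).Nonempty := by
  obtain ⟨c, hc, hξ⟩ := β.exists_mem_mul_of_mem_map_copy_whiskerLeft hξ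
  rw [β.map_comp] at hc
  obtain ⟨c₀, -, hc⟩ := hc
  obtain ⟨rfl, w, hw⟩ := β.eq_of_mem_map_gsDom hc
  rw [β.map_comp, β.map_gsSnd_of_mem_mul hξ]
  exact ⟨w, c, rfl, hw⟩

end IntrinsicBS

theorem quasi_fixed_from_universal_general {T C0 B : C}
    (β : IntrinsicBS C T C0 B) {A : C}
    (heval : β.IsCompleteParam A T β.eval)
    (s : Simulator T C0 C0) (hs : β.IsUniversal s)
    (g : B ⟶ B) : ∃ b : A ⟶ B, β.QuasiFixed b g := by
  obtain ⟨r, hr_fun, hr_univ⟩ := hs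
  rw [β.aim_iff, Category.id_comp, Category.assoc] at hr_univ
  set k : C0 ⟶ B := copy C0 ≫ s.s ≫ β.eval ≫ g
  obtain ⟨t, ht_fun, ht⟩ := heval (gsSnd A C0 ≫ k)
  have hsim : Imitates β.brel (β.map ((t ▷ C0) ≫ (r ▷ C0) ≫ s.s ≫ β.eval))
      (β.map ((t ▷ C0) ≫ β.eval)) := by
    rw [β.map_comp_eq_rComp (t ▷ C0), β.map_comp_eq_rComp (t ▷ C0)]
    exact hr_univ.rComp _ fun _ x _ => by simp [β.eval_beh]
  let c : A ⟶ C0 := (t ≫ r) ≫ gsDom k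
  have hb : c ≫ copy C0 ≫ s.s ≫ β.eval =
      (copy A ≫ (A ◁ c)) ≫ (t ▷ C0) ≫ (r ▷ C0) ≫ s.s ≫ β.eval := by
    have hdiag := (ht_fun.comp_s16 hr_fun).copy_whiskerLeft_comp_whiskerRight
      (copy_whiskerLeft_gsDom k)
    simp only [c, Category.assoc, ← comp_whiskerRight_assoc, reassoc_of% hdiag]
  have hbg : (c ≫ copy C0 ≫ s.s ≫ β.eval) ≫ g = (copy A ≫ (A ◁ c)) ≫ gsSnd A C0 ≫ k := by
    simp only [k, Category.assoc, reassoc_of% (copy_whiskerLeft_gsSnd c)]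
  refine ⟨c ≫ copy C0 ≫ s.s ≫ β.eval, ?_⟩
  rw [IntrinsicBS.QuasiFixed, hbg, hb, β.map_comp_eq_rComp (copy A ≫ (A ◁ c)),
    β.map_comp_eq_rComp (copy A ≫ (A ◁ c))]
  exact (hsim.trans ht β.brel_trans).rComp _ fun _ _ hξ => β.map_gsSnd_comp_nonempty _ k hξ

/-- Quasi-fixed points and simulators: if `eval` is an `A`-complete
parametrization of maps `C0 → B` and there exists a universal simulator with programs
`P = C0`, then every `g : B ⟶ B` has a quasi-fixed point. -/
theorem quasi_fixed_from_universal [GsNormalizedCat C] {T C0 B : C}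
    (β : IntrinsicBS C T C0 B) {A : C}
    (heval : β.IsCompleteParam A T β.eval)
    (s : Simulator T C0 C0) (hs : β.IsUniversal s)
    (g : B ⟶ B) : ∃ b : A ⟶ B, β.QuasiFixed b g :=
  quasi_fixed_from_universal_general β heval s hs g
end
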